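/- arXiv:1407.2779 — 3 statements merged into one kernel-verified Lean document; each statement's English description precedes it below -/
import Mathlib

section
/- For natural numbers k < n, the product of the hook lengths of the rectangular Young diagram with k+1 rows and n-k columns equals ∏_{i=0}^{k} (n-k+i)! / i!. Consequently the quantity ((k+1)(n-k))! · ∏_{i=0}^{k} i! / ∏_{i=0}^{k} (n-k+i)! is a positive integer. -/
/-!
Row `i` of the `s × m` rectangle (counted from the bottom, `i < s`) has hook lengths
`i + 1, …, i + m`, so its hook product is `(m + i)! / i!`. Integrality of
`(s m)! ∏ i! / ∏ (m + i)!` is checked one prime at a time with Legendre's formula: it reduces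
to the floor-sum inequality `∑_{i<s} ⌊(m + i)/q⌋ ≤ ⌊s m / q⌋ + ∑_{i<s} ⌊i/q⌋` for every `q = p ^ t`.
-/

open Finset Nat

theorem prod_Icc_one_sub_eq_prod_range {M : Type*} [CommMonoid M] (f : ℕ → M) (n : ℕ) :
    ∏ c ∈ Icc 1 n, f (n - c) = ∏ j ∈ range n, f j := by
  refine prod_nbij' (n - ·) (n - ·) ?_ ?_ ?_ ?_ ?_ <;> intro a ha <;>
    simp only [mem_Icc, mem_range] at * <;> omega

theorem prod_hook_rectangle_eq (s m : ℕ) :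
    ∏ r ∈ Icc 1 s, ∏ c ∈ Icc 1 m, ((s - r) + (m - c) + 1) =
      ∏ i ∈ range s, ∏ j ∈ range m, (i + 1 + j) := by
  rw [prod_Icc_one_sub_eq_prod_range (fun i ↦ ∏ c ∈ Icc 1 m, (i + (m - c) + 1))]
  refine prod_congr rfl fun i _ ↦ ?_
  rw [← prod_Icc_one_sub_eq_prod_range (fun j ↦ i + 1 + j) m]
  exact prod_congr rfl fun c _ ↦ by ring

theorem prod_hook_rectangle_mul_prod_factorial (s m : ℕ) :
    (∏ r ∈ Icc 1 s, ∏ c ∈ Icc 1 m, ((s - r) + (m - c) + 1)) * ∏ i ∈ range s, i ! =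
      ∏ i ∈ range s, (m + i)! := by
  rw [prod_hook_rectangle_eq, ← prod_mul_distrib]
  refine prod_congr rfl fun i _ ↦ ?_
  rw [mul_comm, ← ascFactorial_eq_prod_range, factorial_mul_ascFactorial, add_comm]

theorem add_div_eq_div_add_div_add_mod_div (a b q : ℕ) :
    (a + b) / q = a / q + b / q + (a % q + b % q) / q := by
  rcases q.eq_zero_or_pos with rfl | hq
  · simp
  conv_lhs => rw [← div_add_mod a q, ← div_add_mod b q]
  rw [show q * (a / q) + a % q + (q * (b / q) + b % q) =
      (a % q + b % q) + q * (a / q + b / q) by ring, Nat.add_mul_div_left _ _ hq]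
  ring

theorem sum_range_add_div_of_le {q b s : ℕ} (hb : b < q) (hs : s ≤ q) :
    ∑ i ∈ range s, (b + i) / q = s + b - q := by
  induction s with
  | zero => simp; omega
  | succ s ih =>
    rw [sum_range_succ, ih (by omega)]
    rcases lt_or_ge (b + s) q with h | h
    · rw [Nat.div_eq_of_lt h]; omega
    · rw [Nat.div_eq_of_lt_le (k := 1) (by omega) (by omega)]; omega

/- The left side counts the `i < s` with `i % q ≥ q - b`; these sit at the end of each block of
`q` consecutive integers, so an initial segment holds at most its share `s * b / q` of them. -/
theorem sum_range_add_mod_div_le {q b : ℕ} (hb : b < q) (s : ℕ) :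
    ∑ i ∈ range s, (b + i % q) / q ≤ s * b / q := by
  induction s using Nat.strong_induction_on with
  | _ s ih =>
    rcases le_or_gt s q with hs | hs
    · rw [sum_congr rfl fun i hi ↦ by rw [mod_eq_of_lt ((mem_range.1 hi).trans_le hs)],
        sum_range_add_div_of_le hb hs, Nat.le_div_iff_mul_le (by omega)]
      rcases le_total (s + b) q with h | h
      · simp [Nat.sub_eq_zero_of_le h]
      · obtain ⟨c, hc⟩ := Nat.exists_eq_add_of_le h
        rw [hc, Nat.add_sub_cancel_left]
        nlinarith
    · obtain ⟨t, rfl⟩ : ∃ t, s = q + t := ⟨s - q, by omega⟩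
      have hfull : ∑ i ∈ range q, (b + i % q) / q = b := by
        rw [sum_congr rfl fun i hi ↦ by rw [mod_eq_of_lt (mem_range.1 hi)],
          sum_range_add_div_of_le hb le_rfl]
        omega
      have hsplit : (q + t) * b / q = b + t * b / q := by
        rw [add_mul, Nat.mul_add_div (by omega)]
      simp only [sum_range_add, hfull, add_mod_left, hsplit]
      exact Nat.add_le_add_left (ih t (by omega)) b

theorem sum_range_add_div_le (q m s : ℕ) :
    ∑ i ∈ range s, (m + i) / q ≤ s * m / q + ∑ i ∈ range s, i / q := by
  rcases q.eq_zero_or_pos with rfl | hq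
  · simp
  have hsm : s * m / q = s * (m / q) + s * (m % q) / q := by
    conv_lhs => rw [← div_add_mod m q, mul_add, mul_left_comm, Nat.mul_add_div hq]
  calc ∑ i ∈ range s, (m + i) / q
      = ∑ i ∈ range s, (m / q + i / q + (m % q + i % q) / q) :=
        sum_congr rfl fun i _ ↦ add_div_eq_div_add_div_add_mod_div m i q
    _ = s * (m / q) + ∑ i ∈ range s, i / q + ∑ i ∈ range s, (m % q + i % q) / q := by
        simp only [sum_add_distrib, sum_const, card_range, smul_eq_mul]
    _ ≤ s * (m / q) + ∑ i ∈ range s, i / q + s * (m % q) / q :=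
        Nat.add_le_add_left (sum_range_add_mod_div_le (mod_lt m hq) s) _
    _ = s * m / q + ∑ i ∈ range s, i / q := by rw [hsm]; ring

theorem factorization_factorial_eq_sum {p x b : ℕ} (hp : p.Prime) (hx : x < b) :
    (x !).factorization p = ∑ t ∈ Ico 1 b, x / p ^ t := by
  have := Fact.mk hp
  rw [factorization_def _ hp, padicValNat_factorial ((log_le_self p x).trans_lt hx)]

theorem prod_factorial_add_dvd (m s : ℕ) :
    ∏ i ∈ range s, (m + i)! ∣ (s * m)! * ∏ i ∈ range s, i ! := by
  refine (factorization_prime_le_iff_dvd (by positivity) (by positivity)).1 fun p hp ↦ ?_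
  set b := s * m + s + 1
  have hbound : ∀ i ∈ range s, m + i < b ∧ i < b := fun i hi ↦ by
    have := mem_range.1 hi
    have : m ≤ s * m := Nat.le_mul_of_pos_left m (by omega)
    omega
  have hprod (f : ℕ → ℕ) :=
    Nat.factorization_prod (S := range s) fun i _ ↦ factorial_ne_zero (f i)
  rw [Nat.factorization_mul (by positivity) (by positivity), hprod, hprod, Finsupp.add_apply,
    Finsupp.finsetSum_apply, Finsupp.finsetSum_apply,
    factorization_factorial_eq_sum hp (by omega : s * m < b)]
  calc ∑ i ∈ range s, ((m + i)!).factorization p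
      = ∑ t ∈ Ico 1 b, ∑ i ∈ range s, (m + i) / p ^ t := by
        rw [sum_comm]
        exact sum_congr rfl fun i hi ↦ factorization_factorial_eq_sum hp (hbound i hi).1
    _ ≤ ∑ t ∈ Ico 1 b, (s * m / p ^ t + ∑ i ∈ range s, i / p ^ t) :=
        sum_le_sum fun t _ ↦ sum_range_add_div_le _ _ _
    _ = ∑ t ∈ Ico 1 b, s * m / p ^ t + ∑ i ∈ range s, (i !).factorization p := by
        rw [sum_add_distrib, sum_comm]
        congr 1
        exact sum_congr rfl fun i hi ↦ (factorization_factorial_eq_sum hp (hbound i hi).2).symm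

theorem hook_length_rectangular_general (k n : ℕ) :
    (∏ r ∈ Finset.Icc 1 (k + 1), ∏ c ∈ Finset.Icc 1 (n - k),
        ((k + 1 - r) + (n - k - c) + 1)) =
      (∏ i ∈ Finset.range (k + 1), Nat.factorial (n - k + i)) /
        (∏ i ∈ Finset.range (k + 1), Nat.factorial i) ∧
    (∏ i ∈ Finset.range (k + 1), Nat.factorial (n - k + i)) ∣
      (Nat.factorial ((k + 1) * (n - k)) * ∏ i ∈ Finset.range (k + 1), Nat.factorial i) ∧
    0 < (Nat.factorial ((k + 1) * (n - k)) * ∏ i ∈ Finset.range (k + 1), Nat.factorial i) /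
      (∏ i ∈ Finset.range (k + 1), Nat.factorial (n - k + i)) := by
  have hdvd := prod_factorial_add_dvd (n - k) (k + 1)
  refine ⟨?_, hdvd, Nat.div_pos (Nat.le_of_dvd (by positivity) hdvd) (by positivity)⟩
  rw [← prod_hook_rectangle_mul_prod_factorial, Nat.mul_div_cancel _ (by positivity)]

/-- The product of the hook lengths of the rectangular Young diagram with `k+1` rows and
`n-k` columns equals `∏_{i=0}^{k} (n-k+i)! / i!`, and consequently
`((k+1)(n-k))! · ∏ i! / ∏ (n-k+i)!` is a positive integer. -/
theorem hook_length_rectangular (k n : ℕ) (h : k < n) :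
    (∏ r ∈ Finset.Icc 1 (k + 1), ∏ c ∈ Finset.Icc 1 (n - k),
        ((k + 1 - r) + (n - k - c) + 1)) =
      (∏ i ∈ Finset.range (k + 1), Nat.factorial (n - k + i)) /
        (∏ i ∈ Finset.range (k + 1), Nat.factorial i) ∧
    (∏ i ∈ Finset.range (k + 1), Nat.factorial (n - k + i)) ∣
      (Nat.factorial ((k + 1) * (n - k)) * ∏ i ∈ Finset.range (k + 1), Nat.factorial i) ∧
    0 < (Nat.factorial ((k + 1) * (n - k)) * ∏ i ∈ Finset.range (k + 1), Nat.factorial i) /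
      (∏ i ∈ Finset.range (k + 1), Nat.factorial (n - k + i)) :=
  hook_length_rectangular_general k n
end

section
/- Let p be a prime and m ≥ 2 a natural number. The number of pairs of finite sequences ((k_1,…,k_s),(n_1,…,n_s)) of positive integers of the same length s, satisfying k_1 ⋯ k_s = p, n_1 ⋯ n_s = m, n_l > 1 for every l > 1, and k_l > 1 for every l < s, equals the number of positive divisors of m. -/
/-!
Since `p` is prime and every `k_l` but the last exceeds `1`, the sequence `k` is `(p)` or
`(p, 1)`. In the first case `n = (m)`; in the second `n = (m / d, d)` for a divisor `d > 1`
of `m`. Sending `(p), (m)` to the divisor `1` and `(p, 1), (m / d, d)` to `d` is a bijection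
onto the divisors of `m`.
-/

namespace UlrichCount

def admissiblePairs (p m : ℕ) : Set (List ℕ × List ℕ) :=
  {q | q.1.length = q.2.length ∧
      q.1.prod = p ∧ q.2.prod = m ∧
      (∀ x ∈ q.1, 0 < x) ∧ (∀ x ∈ q.2, 0 < x) ∧
      (∀ l : Fin q.2.length, 0 < (l : ℕ) → 1 < q.2.get l) ∧
      (∀ l : Fin q.1.length, (l : ℕ) < q.1.length - 1 → 1 < q.1.get l)}

theorem eq_singleton_or_eq_pair_one_of_prod_eq_prime {p : ℕ} (hp : p.Prime) {k : List ℕ}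
    (hprod : k.prod = p) (hgt : ∀ l : Fin k.length, (l : ℕ) < k.length - 1 → 1 < k.get l) :
    k = [p] ∨ k = [p, 1] := by
  match k, hprod, hgt with
  | [], hprod, _ => exact absurd hprod.symm hp.ne_one
  | [a], hprod, _ => simp_all
  | a :: b :: t, hprod, hgt =>
    have ha : 1 < a := hgt ⟨0, by simp⟩ (by simp)
    have ha_eq : a = p :=
      (hp.eq_one_or_self_of_dvd a ⟨b * t.prod, by simp [← hprod]⟩).resolve_left ha.ne'
    have hbt : b * t.prod = 1 := by
      refine Nat.eq_of_mul_eq_mul_left hp.pos ?_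
      simpa [ha_eq, mul_assoc] using hprod
    obtain rfl : b = 1 := Nat.eq_one_of_mul_eq_one_right hbt
    match t with
    | [] => exact .inr (by rw [ha_eq])
    | c :: t' => exact absurd (hgt ⟨1, by simp⟩ (by simp)) (by simp)

def pairOfDivisor (p m d : ℕ) : List ℕ × List ℕ :=
  if d = 1 then ([p], [m]) else ([p, 1], [m / d, d])

theorem pairOfDivisor_injective (p m : ℕ) : Function.Injective (pairOfDivisor p m) := by
  intro d d' h
  unfold pairOfDivisor at h
  split_ifs at h <;> simp_all

theorem pairOfDivisor_mem_admissiblePairs {p m d : ℕ} (hp : p.Prime) (hd : d ∈ m.divisors) :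
    pairOfDivisor p m d ∈ admissiblePairs p m := by
  obtain ⟨hdm, hm⟩ := Nat.mem_divisors.mp hd
  have hm0 : 0 < m := Nat.pos_of_ne_zero hm
  have hd0 : 0 < d := Nat.pos_of_dvd_of_pos hdm hm0
  unfold pairOfDivisor
  split_ifs with hd1
  · simp [admissiblePairs, hp.pos, hm0]
  · have hquot : 0 < m / d := Nat.div_pos (Nat.le_of_dvd hm0 hdm) hd0
    simp [admissiblePairs, Fin.forall_fin_two, Nat.div_mul_cancel hdm, hp.pos, hp.one_lt, hquot,
      hd0]
    omega

theorem exists_pairOfDivisor_eq_of_mem_admissiblePairs {p m : ℕ} (hp : p.Prime)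
    {q : List ℕ × List ℕ} (hq : q ∈ admissiblePairs p m) :
    ∃ d ∈ m.divisors, pairOfDivisor p m d = q := by
  obtain ⟨k, n⟩ := q
  obtain ⟨hlen, hk, hn, -, hnpos, hngt, hkgt⟩ := hq
  have hm : m ≠ 0 := hn ▸ List.prod_ne_zero fun h0 => (hnpos 0 h0).false
  rcases eq_singleton_or_eq_pair_one_of_prod_eq_prime hp hk hkgt with rfl | rfl
  · obtain ⟨x, rfl⟩ := List.length_eq_one_iff.mp hlen.symm
    refine ⟨1, by simp [hm], ?_⟩
    simp_all [pairOfDivisor]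
  · obtain ⟨a, b, rfl⟩ := List.length_eq_two.mp hlen.symm
    have hb : 1 < b := hngt ⟨1, by simp⟩ (by simp)
    simp only [List.prod_cons, List.prod_nil, mul_one] at hn
    refine ⟨b, Nat.mem_divisors.mpr ⟨Dvd.intro_left a hn, hm⟩, ?_⟩
    simp [pairOfDivisor, hb.ne', ← hn, Nat.mul_div_cancel _ (by omega : 0 < b)]

theorem admissiblePairs_eq_image (p m : ℕ) (hp : p.Prime) :
    admissiblePairs p m = m.divisors.image (pairOfDivisor p m) := by
  ext q
  simp only [Finset.coe_image, Set.mem_image, Finset.mem_coe]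
  exact ⟨exists_pairOfDivisor_eq_of_mem_admissiblePairs hp,
    fun ⟨d, hd, hq⟩ => hq ▸ pairOfDivisor_mem_admissiblePairs hp hd⟩

end UlrichCount

theorem count_ulrich_k_prime_general (p m : ℕ) (hp : p.Prime) :
    Set.ncard {q : List ℕ × List ℕ |
      q.1.length = q.2.length ∧
      q.1.prod = p ∧ q.2.prod = m ∧
      (∀ x ∈ q.1, 0 < x) ∧ (∀ x ∈ q.2, 0 < x) ∧
      (∀ l : Fin q.2.length, 0 < (l : ℕ) → 1 < q.2.get l) ∧
      (∀ l : Fin q.1.length, (l : ℕ) < q.1.length - 1 → 1 < q.1.get l)} =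
    m.divisors.card := by
  change (UlrichCount.admissiblePairs p m).ncard = _
  rw [UlrichCount.admissiblePairs_eq_image p m hp, Set.ncard_coe_finset,
    Finset.card_image_of_injective _ (UlrichCount.pairOfDivisor_injective p m)]

/-- For a prime `p`, the number of pairs of sequences `((k₁,…,k_s),(n₁,…,n_s))` of positive
integers of the same length with `∏ kᵢ = p`, `∏ nᵢ = m`, `n_l > 1` for `l > 1` and
`k_l > 1` for `l < s`, equals the number of positive divisors of `m`. -/
theorem count_ulrich_k_prime (p m : ℕ) (hp : p.Prime) (hm : 2 ≤ m) :
    Set.ncard {q : List ℕ × List ℕ |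
      q.1.length = q.2.length ∧
      q.1.prod = p ∧ q.2.prod = m ∧
      (∀ x ∈ q.1, 0 < x) ∧ (∀ x ∈ q.2, 0 < x) ∧
      (∀ l : Fin q.2.length, 0 < (l : ℕ) → 1 < q.2.get l) ∧
      (∀ l : Fin q.1.length, (l : ℕ) < q.1.length - 1 → 1 < q.1.get l)} =
    m.divisors.card :=
  count_ulrich_k_prime_general p m hp
end

section
/- Let k, n be natural numbers with 2(k+1) ≤ n+1, and define t_{i,j} = b_j + n - j + 2 - a_i - (n-k) + (i-1) where b_j = (k+1-j)(n-k-1) for 1 ≤ j ≤ k+1 and a_i = 0 for all 1 ≤ i ≤ n-k. Then the map (i,j) ↦ t_{i,j} is a bijection from {1,…,n-k} × {1,…,k+1} onto {1,…,(k+1)(n-k)}. -/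
/-! The twist simplifies to `t_{i,j} = (k+1-j)(n-k) + i`, so `t - 1` is written in base `n - k`
with low digit `i - 1 ∈ [0, n-k)` and high digit `k+1-j ∈ [0, k+1)`; the bijection is division
with remainder by `n - k`. -/

open Set

namespace Int

theorem bijOn_add_mul_Ico {a m : ℤ} (ha : 0 ≤ a) :
    BijOn (fun p : ℤ × ℤ => p.1 + p.2 * m) (Ico 0 m ×ˢ Ico 0 a) (Ico 0 (a * m)) := by
  rcases le_or_gt m 0 with hm | hm
  · have hdom : Ico 0 m ×ˢ Ico 0 a = ∅ := by simp [Ico_eq_empty_of_le hm]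
    have htgt : Ico 0 (a * m) = ∅ := Ico_eq_empty_of_le (mul_nonpos_of_nonneg_of_nonpos ha hm)
    rw [hdom, htgt]
    exact bijOn_empty _
  have hdivmod : ∀ p ∈ Ico 0 m ×ˢ Ico 0 a, (p.1 + p.2 * m) / m = p.2 ∧ (p.1 + p.2 * m) % m = p.1 :=
    fun p ⟨⟨hr0, hrm⟩, _⟩ => (Int.ediv_emod_unique hm).2 ⟨by ring, hr0, hrm⟩
  refine ⟨?_, ?_, ?_⟩
  · rintro ⟨r, q⟩ ⟨⟨hr0, hrm⟩, hq0, hqa⟩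
    exact ⟨by positivity, by nlinarith⟩
  · intro p hp p' hp' heq
    obtain ⟨hq, hr⟩ := hdivmod p hp
    obtain ⟨hq', hr'⟩ := hdivmod p' hp'
    simp only at heq
    exact Prod.ext (hr.symm.trans (heq ▸ hr')) (hq.symm.trans (heq ▸ hq'))
  · rintro x ⟨hx0, hxa⟩
    refine ⟨(x % m, x / m), ⟨⟨emod_nonneg x hm.ne', emod_lt_of_pos x hm⟩,
      ediv_nonneg hx0 hm.le, (Int.ediv_lt_iff_lt_mul hm).2 hxa⟩, ?_⟩
    simp only
    rw [add_comm, ediv_mul_add_emod]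

theorem bijOn_add_one_Ico (c : ℤ) : BijOn (· + 1) (Ico 0 c) (Icc 1 c) := by
  refine ⟨fun x hx => ?_, fun x _ x' _ h => ?_, fun t ht => ⟨t - 1, ?_, ?_⟩⟩ <;>
    simp only [mem_Icc, mem_Ico] at * <;> omega

end Int

theorem bijOn_natCast_sub_one_Icc_sub (n k : ℕ) :
    BijOn (fun i : ℕ => (i : ℤ) - 1) (Icc 1 (n - k)) (Ico 0 ((n : ℤ) - k)) := by
  refine ⟨fun i hi => ?_, fun i _ i' _ h => ?_, fun t ht => ⟨(t + 1).toNat, ?_, ?_⟩⟩ <;>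
    simp only [mem_Icc, mem_Ico] at * <;> omega

theorem bijOn_natCast_rev_Icc (k : ℕ) :
    BijOn (fun j : ℕ => (k : ℤ) + 1 - j) (Icc 1 (k + 1)) (Ico 0 ((k : ℤ) + 1)) := by
  refine ⟨fun j hj => ?_, fun j _ j' _ h => ?_, fun t ht => ⟨(k + 1 - t).toNat, ?_, ?_⟩⟩ <;>
    simp only [mem_Icc, mem_Ico] at * <;> omega

theorem minimal_ulrich_bijection_general (k n : ℕ) :
    Set.BijOn
      (fun p : ℕ × ℕ =>
        ((k : ℤ) + 1 - (p.2 : ℤ)) * ((n : ℤ) - (k : ℤ) - 1) + (n : ℤ) - (p.2 : ℤ) + 2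
          - 0 - ((n : ℤ) - (k : ℤ)) + ((p.1 : ℤ) - 1))
      ((Set.Icc 1 (n - k) : Set ℕ) ×ˢ (Set.Icc 1 (k + 1) : Set ℕ))
      (Set.Icc (1 : ℤ) (((k : ℤ) + 1) * ((n : ℤ) - (k : ℤ)))) := by
  have hdigits := Int.bijOn_add_mul_Ico (a := (k : ℤ) + 1) (m := (n : ℤ) - k) (by positivity)
  have hindices := (bijOn_natCast_sub_one_Icc_sub n k).prodMap (bijOn_natCast_rev_Icc k)
  refine ((Int.bijOn_add_one_Ico _).comp (hdigits.comp hindices)).congr fun p _ => ?_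
  simp only [Function.comp_apply]
  ring

/-- With `b_j = (k+1-j)(n-k-1)` and `a_i = 0`, the map
`(i,j) ↦ t_{i,j} = b_j + n - j + 2 - a_i - (n-k) + (i-1)` is a bijection from
`{1,…,n-k} × {1,…,k+1}` onto `{1,…,(k+1)(n-k)}`. -/
theorem minimal_ulrich_bijection (k n : ℕ) (h : 2 * (k + 1) ≤ n + 1) :
    Set.BijOn
      (fun p : ℕ × ℕ =>
        ((k : ℤ) + 1 - (p.2 : ℤ)) * ((n : ℤ) - (k : ℤ) - 1) + (n : ℤ) - (p.2 : ℤ) + 2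
          - 0 - ((n : ℤ) - (k : ℤ)) + ((p.1 : ℤ) - 1))
      ((Set.Icc 1 (n - k) : Set ℕ) ×ˢ (Set.Icc 1 (k + 1) : Set ℕ))
      (Set.Icc (1 : ℤ) (((k : ℤ) + 1) * ((n : ℤ) - (k : ℤ)))) :=
  minimal_ulrich_bijection_general k n
end
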